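/- Let n jobs have unit weights (w_j = 1) and positive processing times, and let m ≥ 1 shared processors be available. Let p_{(1)} ≥ p_{(2)} ≥ ⋯ ≥ p_{(n)} be the processing times arranged in non-increasing order. Then the maximum total weighted overlap over all feasible synchronized schedules equals Σ_{i=1}^{n} p_{(i)}/2^{⌈i/m⌉}; in particular, for every partition of the jobs into m groups with the ℓ-th group of size n_ℓ and its processing times sorted ascending q^ℓ_1 ≤ ⋯ ≤ q^ℓ_{n_ℓ}, one has Σ_{ℓ=1}^{m} Σ_{i=1}^{n_ℓ} q^ℓ_i/2^{n_ℓ+1−i} ≤ Σ_{i=1}^{n} p_{(i)}/2^{⌈i/m⌉}, and this bound is attained. -/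

import Mathlib

/-- Start times on a shared processor for a sequence of processing times `q`:
`Tseq q 0 = 0` and `Tseq q (i+1) = (Tseq q i + q_i)/2`; job `i` (0-indexed)
occupies the shared processor during `(Tseq q i, Tseq q (i+1))`. -/
noncomputable def Tseq (q : List ℝ) : ℕ → ℝ
  | 0 => 0
  | i + 1 => (Tseq q i + q.getD i 0) / 2

/-- A sequence of processing times is feasible on a shared processor if every
job is long enough: `q_i > T_i`. -/
def ListFeasible (q : List ℝ) : Prop :=
  ∀ i < q.length, Tseq q i < q.getD i 0

/-- Total weighted overlap of one shared processor executing jobs with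
processing times `q` and weights `v` (in this order): the overlap of the `i`-th
job is `(q_i - T_i)/2`. -/
noncomputable def listOverlap (q v : List ℝ) : ℝ :=
  ∑ i ∈ Finset.range q.length, v.getD i 0 * (q.getD i 0 - Tseq q i) / 2

/-- A synchronized schedule: each of the `m` shared processors gets a finite
sequence of distinct jobs, and each job appears on at most one shared processor
(jobs appearing nowhere execute on their private processors only). -/
structure SyncSchedule (J : Type) (m : ℕ) where
  seq : Fin m → List J
  nodup : ∀ i, (seq i).Nodup
  disj : ∀ i i' j, j ∈ seq i → j ∈ seq i' → i = i'

namespace SyncSchedule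

variable {J : Type} {m : ℕ}

/-- Feasibility of a synchronized schedule for processing times `p`. -/
def Feasible (p : J → ℝ) (S : SyncSchedule J m) : Prop :=
  ∀ i, ListFeasible ((S.seq i).map p)

/-- Total weighted overlap of a synchronized schedule. -/
noncomputable def Omega (p w : J → ℝ) (S : SyncSchedule J m) : ℝ :=
  ∑ i, listOverlap ((S.seq i).map p) ((S.seq i).map w)

/-- A feasible synchronized schedule is optimal if it maximizes the total
weighted overlap among all feasible synchronized schedules. -/
def Optimal (p w : J → ℝ) (S : SyncSchedule J m) : Prop :=
  S.Feasible p ∧ ∀ S' : SyncSchedule J m, S'.Feasible p → S'.Omega p w ≤ S.Omega p w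

end SyncSchedule

/-!
With unit weights the overlaps on a shared processor telescope, so a processor running
`q₁ ≤ ⋯ ≤ q_k` earns `∑ qᵢ / 2 ^ (k + 1 - i)`: the job of rank `r` counted from the end has
weight `1 / 2 ^ r`. Writing `1 / 2 ^ r = ∑_{r ≤ t < N} 1 / 2 ^ (t + 1) + 1 / 2 ^ N` turns any
such sum into `∑_t L_t / 2 ^ (t + 1) + L_N / 2 ^ N`, where the layer `L_t` is the total
processing time of the jobs of rank at most `t`. A schedule has at most `m t` jobs of rank at
most `t`, so `L_t` is at most the sum of the `m t` largest processing times, which is the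
corresponding layer of the bound. Assigning the jobs in non-increasing order round-robin, each
processor running its jobs in ascending order, puts the `i`-th largest job at rank `⌈i / m⌉`
and attains the bound.
-/

open Finset

section DyadicLayers

noncomputable def dyadicLayerSum (N : ℕ) (L : ℕ → ℝ) : ℝ :=
  ∑ t ∈ range N, L t / 2 ^ (t + 1) + L N / 2 ^ N

theorem div_two_pow_eq_sum_Ico_add (x : ℝ) {r N : ℕ} (hr : r ≤ N) :
    x / 2 ^ r = ∑ t ∈ Ico r N, x / 2 ^ (t + 1) + x / 2 ^ N := by
  induction N, hr using Nat.le_induction with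
  | base => simp
  | succ N hrN ih =>
    rw [sum_Ico_succ_top hrN, ih, pow_succ]
    ring

theorem sum_div_two_pow_eq_dyadicLayerSum {ι : Type*} (s : Finset ι) (f : ι → ℝ) (r : ι → ℕ)
    {N : ℕ} (hr : ∀ i ∈ s, r i ≤ N) :
    ∑ i ∈ s, f i / 2 ^ r i = dyadicLayerSum N (fun t => ∑ i ∈ s with r i ≤ t, f i) := by
  have hfilter : ∀ i, {t ∈ range N | r i ≤ t} = Ico (r i) N := fun i => by
    ext t; simp only [mem_filter, mem_range, mem_Ico]; omega
  rw [dyadicLayerSum, filter_true_of_mem hr]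
  simp_rw [sum_filter, sum_div, ite_div, zero_div]
  rw [sum_comm, ← sum_add_distrib]
  refine sum_congr rfl fun i hi => ?_
  rw [← sum_filter, hfilter, div_two_pow_eq_sum_Ico_add _ (hr i hi)]

theorem dyadicLayerSum_mono {N : ℕ} {L L' : ℕ → ℝ} (h : ∀ t ≤ N, L t ≤ L' t) :
    dyadicLayerSum N L ≤ dyadicLayerSum N L' := by
  unfold dyadicLayerSum
  gcongr with t ht
  · exact h t (mem_range.mp ht).le
  · exact h N le_rfl

theorem dyadicLayerSum_sum {κ : Type*} (s : Finset κ) (N : ℕ) (L : κ → ℕ → ℝ) :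
    dyadicLayerSum N (fun t => ∑ k ∈ s, L k t) = ∑ k ∈ s, dyadicLayerSum N (L k) := by
  simp only [dyadicLayerSum, sum_div, sum_add_distrib]
  rw [sum_comm]

end DyadicLayers

theorem sum_range_getD_eq_sum_take {M : Type*} [AddCommMonoid M] (l : List M) (K : ℕ) :
    ∑ i ∈ range K, l.getD i 0 = (l.take K).sum := by
  induction K with
  | zero => simp
  | succ K ih =>
    rw [sum_range_succ, ih]
    rcases lt_or_ge K l.length with hK | hK
    · rw [List.sum_take_succ _ _ hK, List.getD_eq_getElem _ _ hK]
    · rw [List.take_of_length_le hK, List.take_of_length_le (by omega),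
        List.getD_eq_default _ _ hK, add_zero]

theorem sum_getD_div_two_pow_eq_dyadicLayerSum (l : List ℝ) (r K : ℕ → ℕ)
    (hK : ∀ i t, r i ≤ t ↔ i < K t) {N : ℕ} (hN : l.length ≤ K N) :
    ∑ i ∈ range l.length, l.getD i 0 / 2 ^ r i
      = dyadicLayerSum N (fun t => (l.take (K t)).sum) := by
  have hr : ∀ i ∈ range l.length, r i ≤ N := fun i hi =>
    (hK i N).mpr (by rw [mem_range] at hi; omega)
  rw [sum_div_two_pow_eq_dyadicLayerSum _ _ _ hr]
  congr 1
  funext t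
  have hfilter : {i ∈ range l.length | r i ≤ t} = range (min l.length (K t)) := by
    ext i; simp only [mem_filter, mem_range, hK]; omega
  rw [hfilter, ← sum_range_getD_eq_sum_take]
  refine sum_subset (range_subset_range.mpr (min_le_right _ _)) fun i hi hi' => ?_
  simp only [mem_range] at hi hi'
  exact List.getD_eq_default _ _ (by omega)

noncomputable def unitOverlap (q : List ℝ) : ℝ :=
  ∑ i ∈ range q.length, q.getD i 0 / 2 ^ (q.length - i)

/-- With `0`-based index `i`, the exponent `(i + m) / m` is `⌈(i + 1) / m⌉`. -/
noncomputable def roundRobinBound (m : ℕ) (d : List ℝ) : ℝ :=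
  ∑ i ∈ range d.length, d.getD i 0 / 2 ^ ((i + m) / m)

theorem unitOverlap_eq_sum_reverse (q : List ℝ) :
    unitOverlap q = ∑ i ∈ range q.length, q.reverse.getD i 0 / 2 ^ (i + 1) := by
  rw [unitOverlap, ← sum_range_reflect]
  refine sum_congr rfl fun i hi => ?_
  rw [mem_range] at hi
  rw [List.getD_reverse _ hi, show q.length - (q.length - 1 - i) = i + 1 by omega]

theorem unitOverlap_eq_dyadicLayerSum (q : List ℝ) {N : ℕ} (hN : q.length ≤ N) :
    unitOverlap q = dyadicLayerSum N (fun t => (q.reverse.take t).sum) := by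
  rw [unitOverlap_eq_sum_reverse, ← List.length_reverse]
  exact sum_getD_div_two_pow_eq_dyadicLayerSum _ _ _ (fun i t => Nat.succ_le_iff)
    (by simpa using hN)

theorem roundRobinBound_eq_dyadicLayerSum {m : ℕ} (hm : 0 < m) (d : List ℝ) {N : ℕ}
    (hN : d.length ≤ N) :
    roundRobinBound m d = dyadicLayerSum N (fun t => (d.take (m * t)).sum) := by
  refine sum_getD_div_two_pow_eq_dyadicLayerSum _ _ _ (fun i t => ?_) ?_
  · rw [Nat.add_div_right _ hm, Nat.succ_le_iff, Nat.div_lt_iff_lt_mul hm, mul_comm]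
  · exact hN.trans (Nat.le_mul_of_pos_left N hm)

theorem List.sum_take_succ_le {α : Type*} [AddCommMonoid α] [LinearOrder α] [IsOrderedAddMonoid α]
    {l : List α} {a : α} (hl : ∀ x ∈ l, x ≤ a) (ha : 0 ≤ a)
    (k : ℕ) : (l.take (k + 1)).sum ≤ a + (l.take k).sum := by
  rcases lt_or_ge k l.length with hk | hk
  · rw [List.sum_take_succ _ _ hk, add_comm]
    gcongr
    exact hl _ (List.getElem_mem hk)
  · rw [List.take_of_length_le hk, List.take_of_length_le (by omega)]
    exact le_add_of_nonneg_left ha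

theorem Multiset.sum_le_sum_take {α : Type*} [AddCommMonoid α] [LinearOrder α]
    [IsOrderedAddMonoid α] {d : List α} (hd : d.Pairwise (· ≥ ·)) (hnn : ∀ x ∈ d, 0 ≤ x)
    {M : Multiset α} (hM : M ≤ d) {k : ℕ} (hk : M.card ≤ k) : M.sum ≤ (d.take k).sum := by
  classical
  induction d generalizing M k with
  | nil => simp [Multiset.le_zero.mp hM]
  | cons a d ih =>
    obtain ⟨had, hd⟩ := List.pairwise_cons.mp hd
    have hnn' : ∀ x ∈ d, 0 ≤ x := fun x hx => hnn x (List.mem_cons_of_mem a hx)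
    cases k with
    | zero => simp [Multiset.card_eq_zero.mp (Nat.le_zero.mp hk)]
    | succ k =>
      rw [List.take_succ_cons, List.sum_cons]
      by_cases haM : a ∈ M
      · rw [← Multiset.cons_erase haM, Multiset.sum_cons]
        refine add_le_add_right (ih hd hnn' ?_ ?_) a
        · simpa using Multiset.erase_le_erase a hM
        · rw [Multiset.card_erase_of_mem haM, Nat.pred_eq_sub_one]; omega
      · exact (ih hd hnn' ((Multiset.le_cons_of_notMem haM).mp hM) hk).trans
          (List.sum_take_succ_le had (hnn a List.mem_cons_self) k)

theorem sum_unitOverlap_le_roundRobinBound {m : ℕ} (hm : 0 < m) {d : List ℝ}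
    (hd : d.Pairwise (· ≥ ·)) (hnn : ∀ x ∈ d, 0 ≤ x) (s : Fin m → List ℝ)
    (hs : ∑ ℓ, (s ℓ : Multiset ℝ) ≤ d) :
    ∑ ℓ, unitOverlap (s ℓ) ≤ roundRobinBound m d := by
  have hlen : ∀ ℓ, (s ℓ).length ≤ d.length := fun ℓ =>
    Multiset.card_le_card ((single_le_sum (fun _ _ => zero_le) (mem_univ ℓ)).trans hs)
  calc ∑ ℓ, unitOverlap (s ℓ)
      = ∑ ℓ, dyadicLayerSum d.length (fun t => ((s ℓ).reverse.take t).sum) :=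
        sum_congr rfl fun ℓ _ => unitOverlap_eq_dyadicLayerSum _ (hlen ℓ)
    _ = dyadicLayerSum d.length (fun t => ∑ ℓ, ((s ℓ).reverse.take t).sum) :=
        (dyadicLayerSum_sum _ _ _).symm
    _ ≤ dyadicLayerSum d.length (fun t => (d.take (m * t)).sum) :=
        dyadicLayerSum_mono fun t _ => ?_
    _ = roundRobinBound m d := (roundRobinBound_eq_dyadicLayerSum hm d le_rfl).symm
  -- the `t` last jobs of all processors are at most `m * t` of the jobs
  have hsub : ∑ ℓ, (((s ℓ).reverse.take t : List ℝ) : Multiset ℝ) ≤ d :=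
    (sum_le_sum fun ℓ _ => by
      simpa using Multiset.coe_le.mpr (List.take_sublist t (s ℓ).reverse).subperm).trans hs
  have hcard : (∑ ℓ, (((s ℓ).reverse.take t : List ℝ) : Multiset ℝ)).card ≤ m * t := by
    rw [Multiset.card_sum]
    calc ∑ ℓ, ((s ℓ).reverse.take t).length ≤ ∑ _ℓ : Fin m, t :=
          sum_le_sum fun ℓ _ => by simp
      _ = m * t := by simp
  simpa [Multiset.sum_sum] using Multiset.sum_le_sum_take hd hnn hsub hcard

/-- Round-robin assignment of a list `l` (in ascending order of processing times) to `m`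
processors: the entry at position `i` of `l.reverse` goes to processor `i % m`. -/
def roundRobin {α : Type*} (m : ℕ) : List α → Fin m → List α
  | [], _ => []
  | x :: l, ℓ => if l.length % m = ℓ then x :: roundRobin m l ℓ else roundRobin m l ℓ

section RoundRobin

variable {α : Type*} {m : ℕ}

theorem roundRobin_sublist (l : List α) (ℓ : Fin m) : (roundRobin m l ℓ).Sublist l := by
  induction l with
  | nil => exact List.Sublist.slnil
  | cons x l ih =>
    rw [roundRobin]
    split_ifs
    · exact ih.cons_cons x
    · exact ih.cons x

theorem roundRobin_map {β : Type*} (f : α → β) (l : List α) (ℓ : Fin m) :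
    roundRobin m (l.map f) ℓ = (roundRobin m l ℓ).map f := by
  induction l with
  | nil => rfl
  | cons x l ih => simp only [List.map_cons, roundRobin, List.length_map, ih]; split_ifs <;> rfl

theorem length_roundRobin (l : List α) (ℓ : Fin m) :
    (roundRobin m l ℓ).length = Nat.count (· ≡ ℓ [MOD m]) l.length := by
  induction l with
  | nil => rfl
  | cons x l ih =>
    have hmod : l.length ≡ ℓ [MOD m] ↔ l.length % m = ℓ := by
      rw [Nat.ModEq, Nat.mod_eq_of_lt ℓ.isLt]
    rw [roundRobin, List.length_cons, Nat.count_succ, ← ih]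
    by_cases h : l.length % m = ℓ <;> simp [h, hmod]

theorem eq_of_mem_roundRobin {l : List α} (hl : l.Nodup) {x : α} {ℓ ℓ' : Fin m}
    (h : x ∈ roundRobin m l ℓ) (h' : x ∈ roundRobin m l ℓ') : ℓ = ℓ' := by
  induction l with
  | nil => simp [roundRobin] at h
  | cons y l ih =>
    obtain ⟨hyl, hl⟩ := List.nodup_cons.mp hl
    by_cases hxy : x = y
    · subst hxy
      have key : ∀ ℓ, x ∈ roundRobin m (x :: l) ℓ → l.length % m = ℓ := fun ℓ hx => by
        rw [roundRobin] at hx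
        split_ifs at hx with hℓ
        · exact hℓ
        · exact absurd ((roundRobin_sublist l ℓ).subset hx) hyl
      exact Fin.ext ((key ℓ h).symm.trans (key ℓ' h'))
    · have key : ∀ ℓ, x ∈ roundRobin m (y :: l) ℓ → x ∈ roundRobin m l ℓ := fun ℓ hx => by
        rw [roundRobin] at hx
        split_ifs at hx
        exacts [(List.mem_cons.mp hx).resolve_left hxy, hx]
      exact ih hl (key ℓ h) (key ℓ' h')

end RoundRobin

theorem unitOverlap_cons (x : ℝ) (q : List ℝ) :
    unitOverlap (x :: q) = unitOverlap q + x / 2 ^ (q.length + 1) := by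
  simp [unitOverlap, sum_range_succ']

theorem roundRobinBound_append_singleton (m : ℕ) (d : List ℝ) (x : ℝ) :
    roundRobinBound m (d ++ [x]) = roundRobinBound m d + x / 2 ^ ((d.length + m) / m) := by
  rw [roundRobinBound, List.length_append, List.length_singleton, sum_range_succ,
    List.getD_append_right _ _ _ _ le_rfl, Nat.sub_self]
  congr 1
  exact sum_congr rfl fun i hi => by rw [List.getD_append _ _ _ _ (mem_range.mp hi)]

theorem sum_unitOverlap_roundRobin {m : ℕ} (hm : 0 < m) (l : List ℝ) :
    ∑ ℓ, unitOverlap (roundRobin m l ℓ) = roundRobinBound m l.reverse := by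
  induction l with
  | nil => simp [roundRobin, unitOverlap, roundRobinBound]
  | cons x l ih =>
    let ℓ₀ : Fin m := ⟨l.length % m, Nat.mod_lt _ hm⟩
    have hℓ₀ : (roundRobin m l ℓ₀).length = l.length / m := by
      rw [length_roundRobin, Nat.count_modEq_card _ hm]
      simp [ℓ₀]
    have hstep : ∀ ℓ, unitOverlap (roundRobin m (x :: l) ℓ)
        = unitOverlap (roundRobin m l ℓ)
          + if ℓ = ℓ₀ then x / 2 ^ ((roundRobin m l ℓ).length + 1) else 0 := fun ℓ => by
      have : l.length % m = ℓ ↔ ℓ = ℓ₀ := by rw [Fin.ext_iff]; exact eq_comm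
      rw [roundRobin]
      split_ifs with h₁ h₂ h₂
      · rw [unitOverlap_cons]
      · exact absurd (this.mp h₁) h₂
      · exact absurd (this.mpr h₂) h₁
      · rw [add_zero]
    rw [sum_congr rfl fun ℓ _ => hstep ℓ, sum_add_distrib, sum_ite_eq' univ ℓ₀,
      if_pos (mem_univ _), ih, hℓ₀, List.reverse_cons, roundRobinBound_append_singleton,
      List.length_reverse, Nat.add_div_right _ hm]

theorem Tseq_eq_sum (q : List ℝ) (k : ℕ) :
    Tseq q k = ∑ i ∈ range k, q.getD i 0 / 2 ^ (k - i) := by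
  induction k with
  | zero => rfl
  | succ k ih =>
    rw [Tseq, ih, sum_range_succ, add_div, sum_div, Nat.add_sub_cancel_left]
    congr 1
    · exact sum_congr rfl fun i hi => by
        rw [div_div, ← pow_succ, Nat.sub_add_comm (mem_range.mp hi).le]
    · ring

/-- With unit weights the overlaps telescope: job `i` contributes `T_{i+1} - T_i`. -/
theorem listOverlap_replicate_one (q : List ℝ) :
    listOverlap q (List.replicate q.length 1) = unitOverlap q := by
  have hterm : ∀ i ∈ range q.length, (List.replicate q.length (1 : ℝ)).getD i 0
      * (q.getD i 0 - Tseq q i) / 2 = Tseq q (i + 1) - Tseq q i := fun i hi => by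
    rw [List.getD_eq_getElem _ _ (by simpa using hi), List.getElem_replicate, Tseq]
    ring
  rw [listOverlap, sum_congr rfl hterm, sum_range_sub, Tseq_eq_sum, unitOverlap]
  simp [Tseq]

theorem listFeasible_of_pairwise_le {q : List ℝ} (hq : q.Pairwise (· ≤ ·))
    (hpos : ∀ x ∈ q, 0 < x) : ListFeasible q := by
  intro i hi
  induction i with
  | zero =>
    rw [Tseq, List.getD_eq_getElem _ _ hi]
    exact hpos _ (List.getElem_mem hi)
  | succ i ih =>
    have hi' : i < q.length := by omega
    have hle : q.getD i 0 ≤ q.getD (i + 1) 0 := by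
      rw [List.getD_eq_getElem _ _ hi', List.getD_eq_getElem _ _ hi]
      exact List.pairwise_iff_getElem.mp hq i (i + 1) hi' hi (by omega)
    rw [Tseq]
    linarith [ih hi']

namespace SyncSchedule

variable {J : Type} {m : ℕ}

theorem Omega_one (p : J → ℝ) (S : SyncSchedule J m) :
    S.Omega p (fun _ => 1) = ∑ ℓ, unitOverlap ((S.seq ℓ).map p) := by
  refine sum_congr rfl fun ℓ _ => ?_
  rw [List.map_const', ← List.length_map p, listOverlap_replicate_one]

theorem sum_seq_le_univ [Fintype J] (S : SyncSchedule J m) :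
    ∑ ℓ, ((S.seq ℓ : List J) : Multiset J) ≤ Finset.univ.val := by
  classical
  refine Multiset.le_iff_count.mpr fun j => ?_
  rw [Multiset.count_univ, Multiset.count_sum']
  by_cases hj : ∃ ℓ, j ∈ S.seq ℓ
  · obtain ⟨ℓ, hℓ⟩ := hj
    have hothers : ∀ ℓ' ∈ univ, ℓ' ≠ ℓ → Multiset.count j (S.seq ℓ') = 0 := fun ℓ' _ hne =>
      Multiset.count_eq_zero.mpr fun h => hne (S.disj _ _ j h hℓ)
    rw [sum_eq_single ℓ hothers (by simp), Multiset.coe_count]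
    exact List.nodup_iff_count_le_one.mp (S.nodup ℓ) j
  · push Not at hj
    simp [List.count_eq_zero_of_not_mem (hj _)]

theorem sum_map_seq_le [Fintype J] {p : J → ℝ} {d : List ℝ}
    (hperm : d.Perm (Finset.univ.toList.map p)) (S : SyncSchedule J m) :
    ∑ ℓ, (((S.seq ℓ).map p : List ℝ) : Multiset ℝ) ≤ d := by
  have hd : (d : Multiset ℝ) = Finset.univ.val.map p := by
    rw [Multiset.coe_eq_coe.mpr hperm, ← Multiset.map_coe, Finset.coe_toList]
  rw [hd]
  calc ∑ ℓ, (((S.seq ℓ).map p : List ℝ) : Multiset ℝ)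
      = (∑ ℓ, ((S.seq ℓ : List J) : Multiset J)).map p := by
        rw [← Multiset.mapAddMonoidHom_apply, map_sum]
        simp
    _ ≤ Finset.univ.val.map p := Multiset.map_le_map S.sum_seq_le_univ

noncomputable def ofAssignment [Fintype J] (g : J → Fin m) : SyncSchedule J m where
  seq ℓ := (Finset.univ.filter (fun j => g j = ℓ)).toList
  nodup _ := Finset.nodup_toList _
  disj ℓ ℓ' j h h' := by
    simp only [Finset.mem_toList, Finset.mem_filter] at h h'
    rw [← h.2, ← h'.2]

def roundRobin (l : List J) (hl : l.Nodup) : SyncSchedule J m where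
  seq := _root_.roundRobin m l
  nodup ℓ := (roundRobin_sublist l ℓ).nodup hl
  disj _ _ _ := eq_of_mem_roundRobin hl

end SyncSchedule

theorem exists_feasible_Omega_eq_roundRobinBound {J : Type} [Fintype J] {m : ℕ} (hm : 0 < m)
    {p : J → ℝ} (hp : ∀ j, 0 < p j) {d : List ℝ} (hperm : d.Perm (Finset.univ.toList.map p))
    (hsorted : d.Pairwise (· ≥ ·)) :
    ∃ S : SyncSchedule J m, S.Feasible p ∧ S.Omega p (fun _ => 1) = roundRobinBound m d := by
  set R := Finset.univ.toList.mergeSort fun a b => decide (p a ≤ p b)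
  have hRperm : R.Perm Finset.univ.toList := List.mergeSort_perm _ _
  have hRsorted : (R.map p).Pairwise (· ≤ ·) := List.pairwise_map.mpr <| by
    simpa using List.pairwise_mergeSort (le := fun a b => decide (p a ≤ p b))
      (fun a b c hab hbc => by simp only [decide_eq_true_eq] at *; linarith)
      (fun a b => by simpa using le_total (p a) (p b)) Finset.univ.toList
  have hRd : (R.map p).reverse = d := by
    refine List.Perm.eq_of_sortedGE (List.sortedGE_reverse.mpr (List.sortedLE_iff_pairwise.mpr
      hRsorted)) (List.sortedGE_iff_pairwise.mpr hsorted) ?_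
    exact (List.reverse_perm _).trans ((hRperm.map p).trans hperm.symm)
  have hRnodup : R.Nodup := hRperm.nodup_iff.mpr (Finset.nodup_toList _)
  refine ⟨SyncSchedule.roundRobin R hRnodup, fun ℓ => ?_, ?_⟩
  · refine listFeasible_of_pairwise_le (hRsorted.sublist ((roundRobin_sublist R ℓ).map p)) ?_
    simp only [List.mem_map]
    rintro _ ⟨j, -, rfl⟩
    exact hp j
  · rw [SyncSchedule.Omega_one]
    simp only [SyncSchedule.roundRobin, ← roundRobin_map]
    rw [sum_unitOverlap_roundRobin hm, hRd]

open Finset in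
theorem unit_weight_multiprocessor_optimum_general
    {J : Type} [Fintype J] {m : ℕ} (hm : 1 ≤ m)
    (p : J → ℝ) (hp : ∀ j, 0 < p j)
    (d : List ℝ) (hperm : d.Perm (Finset.univ.toList.map p))
    (hsorted : d.Pairwise (· ≥ ·)) :
    IsGreatest
      {x : ℝ | ∃ S : SyncSchedule J m,
        S.Feasible p ∧ S.Omega p (fun _ => 1) = x}
      (∑ i ∈ Finset.range d.length, d.getD i 0 / 2 ^ ((i + m) / m)) ∧
    (∀ (g : J → Fin m) (s : Fin m → List ℝ),
      (∀ ℓ : Fin m,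
        (s ℓ).Perm ((Finset.univ.filter (fun j => g j = ℓ)).toList.map p) ∧
        (s ℓ).Pairwise (· ≤ ·)) →
      ∑ ℓ : Fin m, ∑ i ∈ Finset.range (s ℓ).length,
          (s ℓ).getD i 0 / 2 ^ ((s ℓ).length - i)
        ≤ ∑ i ∈ Finset.range d.length, d.getD i 0 / 2 ^ ((i + m) / m)) := by
  have hnn : ∀ x ∈ d, 0 ≤ x := fun x hx => by
    obtain ⟨j, -, rfl⟩ := List.mem_map.mp (hperm.subset hx)
    exact (hp j).le
  refine ⟨⟨exists_feasible_Omega_eq_roundRobinBound hm hp hperm hsorted, ?_⟩, fun g s hs => ?_⟩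
  · rintro _ ⟨S, -, rfl⟩
    rw [SyncSchedule.Omega_one]
    exact sum_unitOverlap_le_roundRobinBound hm hsorted hnn _ (S.sum_map_seq_le hperm)
  · refine sum_unitOverlap_le_roundRobinBound hm hsorted hnn s ?_
    simpa [SyncSchedule.ofAssignment, Multiset.coe_eq_coe.mpr (hs _).1] using
      (SyncSchedule.ofAssignment g).sum_map_seq_le hperm

open Finset in
/-- Unit weights, `m ≥ 1` shared processors.  Let
`d = [p_(1), …, p_(n)]` list the processing times in non-increasing order.
Then the maximum total weighted overlap over all feasible synchronized
schedules equals `B = Σ_{i=1}^{n} p_(i) / 2^⌈i/m⌉` (0-indexed below: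
`⌈(i+1)/m⌉ = (i+m)/m` by natural division); in particular, for every partition
of the jobs into `m` groups, the ℓ-th group sorted ascending as
`q^ℓ_1 ≤ ⋯ ≤ q^ℓ_{n_ℓ}`, one has
`Σ_ℓ Σ_i q^ℓ_i / 2^(n_ℓ+1-i) ≤ B`, and the bound is attained. -/
theorem unit_weight_multiprocessor_optimum
    {J : Type} [Fintype J] [DecidableEq J] {m : ℕ} (hm : 1 ≤ m)
    (p : J → ℝ) (hp : ∀ j, 0 < p j)
    (d : List ℝ) (hperm : d.Perm (Finset.univ.toList.map p))
    (hsorted : d.Pairwise (· ≥ ·)) :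
    IsGreatest
      {x : ℝ | ∃ S : SyncSchedule J m,
        S.Feasible p ∧ S.Omega p (fun _ => 1) = x}
      (∑ i ∈ Finset.range d.length, d.getD i 0 / 2 ^ ((i + m) / m)) ∧
    (∀ (g : J → Fin m) (s : Fin m → List ℝ),
      (∀ ℓ : Fin m,
        (s ℓ).Perm ((Finset.univ.filter (fun j => g j = ℓ)).toList.map p) ∧
        (s ℓ).Pairwise (· ≤ ·)) →
      ∑ ℓ : Fin m, ∑ i ∈ Finset.range (s ℓ).length,
          (s ℓ).getD i 0 / 2 ^ ((s ℓ).length - i)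
        ≤ ∑ i ∈ Finset.range d.length, d.getD i 0 / 2 ^ ((i + m) / m)) :=
  unit_weight_multiprocessor_optimum_general hm p hp d hperm hsorted
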